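/- arXiv:2501.15635 — 5 statements merged into one kernel-verified Lean document; each statement's English description precedes it below -/
import Mathlib

section
/- Let k be a field, m ≥ 1 an integer, and let (P_•, d^P) and (Q_•, d^Q) be bounded pointwise-exact linear complexes over k^m. Fix an integer j and a degree-j morphism of linear complexes, i.e., k-linear maps φ_i : P_i → Q_{i+j} (for all i ∈ ℤ) satisfying φ_{i+1} ∘ d^P_i(v) = d^Q_{i+j}(v) ∘ φ_i for all i and all v ∈ k^m. Fix an index i and assume that φ_i and φ_{i+1} are surjective. Then: (a) for every v ∈ k^m the map d^P_{i+1}(v) sends ker φ_{i+1} into ker φ_{i+2}; and (b) for every nonzero v ∈ k^m the induced k-linear map ker φ_{i+1} → ker φ_{i+2} has rank equal to ∑_{k≥0} (−1)^k dim_k P_{i+2+k} − ∑_{k≥0} (−1)^k dim_k Q_{i+j+2+k} (both sums are finite by boundedness). In particular, v ↦ d^P_{i+1}(v)|_{ker φ_{i+1}} is a (dim ker φ_{i+2}) × (dim P_{i+1} − dim Q_{i+j+1}) matrix of linear forms in m variables of constant rank. -/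
private def famCast (k : Type*) [Field k] (Q : ℤ → Type*)
    [∀ i, AddCommGroup (Q i)] [∀ i, Module k (Q i)] {a b : ℤ} (h : a = b) :
    Q a ≃ₗ[k] Q b := by subst h; exact LinearEquiv.refl k (Q a)

private lemma famCast_apply (k : Type*) [Field k] (Q : ℤ → Type*)
    [∀ i, AddCommGroup (Q i)] [∀ i, Module k (Q i)] {a b : ℤ} (h : a = b) (x : Q a) :
    famCast k Q h x = cast (congrArg Q h) x := by subst h; rfl

private lemma cast_zero_of_eq (k : Type*) [Field k] (Q : ℤ → Type*)
    [∀ i, AddCommGroup (Q i)] [∀ i, Module k (Q i)] {a b : ℤ} (h : a = b) :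
    cast (congrArg Q h) (0 : Q a) = (0 : Q b) := by subst h; rfl

private lemma telescope_tsum (f r : ℤ → ℕ) (a : ℤ)
    (hf : ∀ s : ℤ, f s = r s + r (s - 1))
    (hr : ∀ s : ℤ, 0 ≤ s → r s = 0) :
    ∑' t : ℕ, (-1 : ℤ) ^ t * (f (a + t) : ℤ) = (r (a - 1) : ℤ) := by
  obtain ⟨N, hN⟩ : ∃ N : ℕ, 1 ≤ a + N := ⟨(1 - a).toNat, by omega⟩
  have hzero : ∀ t : ℕ, t ∉ Finset.range N → (-1 : ℤ) ^ t * (f (a + t) : ℤ) = 0 := by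
    intro t ht
    have htN : N ≤ t := by simpa [Finset.mem_range, not_lt] using ht
    have hft : f (a + t) = 0 := by
      rw [hf, hr (a + t) (by omega), hr (a + t - 1) (by omega)]
    simp [hft]
  rw [tsum_eq_sum hzero]
  have key : ∀ n : ℕ, ∑ t ∈ Finset.range n, (-1 : ℤ) ^ t * (f (a + t) : ℤ)
      = (r (a - 1) : ℤ) - (-1 : ℤ) ^ n * (r (a + n - 1) : ℤ) := by
    intro n
    induction n with
    | zero => simp
    | succ n ih =>
      rw [Finset.sum_range_succ, ih, hf (a + n)]
      have e1 : ((n + 1 : ℕ) : ℤ) = (n : ℤ) + 1 := by push_cast; ring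
      rw [e1]
      have e2 : a + ((n : ℤ) + 1) - 1 = a + n := by ring
      rw [e2]
      push_cast
      ring
  rw [key N, hr (a + N - 1) (by omega)]
  simp



set_option maxHeartbeats 1000000 in
/-- Theorem (construction of constant rank matrices from a degree-`j` morphism of
bounded pointwise-exact linear complexes over `k^m`).

Given bounded pointwise-exact linear complexes `(P_•, dP)` and `(Q_•, dQ)` over `k^m`,
a degree-`j` morphism `φ_• : P_• → Q_{•+j}` commuting with the differentials, and an
index `i` such that `φ_i` and `φ_{i+1}` are surjective, then:
(a) for every `v`, `dP_{i+1}(v)` sends `ker φ_{i+1}` into `ker φ_{i+2}`; and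
(b) for every nonzero `v`, the induced map `ker φ_{i+1} → ker φ_{i+2}` has rank
`∑_{t≥0} (−1)^t dim P_{i+2+t} − ∑_{t≥0} (−1)^t dim Q_{i+j+2+t}`. -/
theorem constant_rank_matrix_from_complex_morphism
    (k : Type*) [Field k] (m : ℕ) (hm : 1 ≤ m)
    (P Q : ℤ → Type*)
    [∀ i, AddCommGroup (P i)] [∀ i, Module k (P i)] [∀ i, FiniteDimensional k (P i)]
    [∀ i, AddCommGroup (Q i)] [∀ i, Module k (Q i)] [∀ i, FiniteDimensional k (Q i)]
    (dP : ∀ i : ℤ, (Fin m → k) →ₗ[k] (P i →ₗ[k] P (i + 1)))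
    (dQ : ∀ i : ℤ, (Fin m → k) →ₗ[k] (Q i →ₗ[k] Q (i + 1)))
    -- boundedness
    (hPtop : ∀ i : ℤ, 0 < i → Module.finrank k (P i) = 0)
    (hPbot : ∃ N : ℤ, ∀ i : ℤ, i < N → Module.finrank k (P i) = 0)
    (hQtop : ∀ i : ℤ, 0 < i → Module.finrank k (Q i) = 0)
    (hQbot : ∃ N : ℤ, ∀ i : ℤ, i < N → Module.finrank k (Q i) = 0)
    -- complexes
    (hPc : ∀ (v : Fin m → k) (i : ℤ), (dP (i + 1) v).comp (dP i v) = 0)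
    (hQc : ∀ (v : Fin m → k) (i : ℤ), (dQ (i + 1) v).comp (dQ i v) = 0)
    -- pointwise exactness for nonzero v
    (hPe : ∀ v : Fin m → k, v ≠ 0 →
      ∀ i : ℤ, LinearMap.ker (dP (i + 1) v) = LinearMap.range (dP i v))
    (hQe : ∀ v : Fin m → k, v ≠ 0 →
      ∀ i : ℤ, LinearMap.ker (dQ (i + 1) v) = LinearMap.range (dQ i v))
    -- degree-j morphism of complexes
    (j : ℤ) (φ : ∀ i : ℤ, P i →ₗ[k] Q (i + j))
    (hφ : ∀ (i : ℤ) (v : Fin m → k) (x : P i),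
      φ (i + 1) (dP i v x) =
        cast (congrArg Q (by ring : i + j + 1 = i + 1 + j)) (dQ (i + j) v (φ i x)))
    -- the two surjectivity assumptions
    (i : ℤ)
    (hsi : Function.Surjective (φ i))
    (hsi1 : Function.Surjective (φ (i + 1))) :
    (∀ (v : Fin m → k) (x : P (i + 1)),
        x ∈ LinearMap.ker (φ (i + 1)) →
          dP (i + 1) v x ∈ LinearMap.ker (φ (i + 1 + 1))) ∧
    (∀ v : Fin m → k, v ≠ 0 →
      (Module.finrank k
          (Submodule.map (dP (i + 1) v) (LinearMap.ker (φ (i + 1)))) : ℤ) =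
        (∑' t : ℕ, (-1 : ℤ) ^ t * (Module.finrank k (P (i + 2 + t)) : ℤ)) -
        (∑' t : ℕ, (-1 : ℤ) ^ t * (Module.finrank k (Q (i + j + 2 + t)) : ℤ))) := by
  constructor
  · -- part (a)
    intro v x hx
    simp only [LinearMap.mem_ker] at hx ⊢
    rw [hφ (i + 1) v x, hx, map_zero]
    exact cast_zero_of_eq k Q (by ring)
  · -- part (b)
    intro v hv
    -- exactness facts
    have hker : LinearMap.ker (dP (i + 1) v) = LinearMap.range (dP i v) := hPe v hv i
    have hQker : LinearMap.ker (dQ (i + j + 1) v) = LinearMap.range (dQ (i + j) v) :=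
      hQe v hv (i + j)
    -- e5 : rank-nullity for dP (i+1)
    have e5 : Module.finrank k (LinearMap.range (dP (i + 1) v))
        + Module.finrank k (LinearMap.range (dP i v)) = Module.finrank k (P (i + 1)) := by
      rw [← hker]; exact LinearMap.finrank_range_add_finrank_ker _
    -- e6 : rank-nullity for dQ (i+j+1)
    have e6 : Module.finrank k (LinearMap.range (dQ (i + j + 1) v))
        + Module.finrank k (LinearMap.range (dQ (i + j) v))
        = Module.finrank k (Q (i + j + 1)) := by
      rw [← hQker]; exact LinearMap.finrank_range_add_finrank_ker _
    -- e2 : surjectivity of φ (i+1)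
    have e2 : Module.finrank k (Q (i + 1 + j))
        + Module.finrank k (LinearMap.ker (φ (i + 1))) = Module.finrank k (P (i + 1)) := by
      have h := LinearMap.finrank_range_add_finrank_ker (φ (i + 1))
      rwa [LinearMap.range_eq_top.mpr hsi1, finrank_top] at h
    -- e7
    have e7 : Module.finrank k (Q (i + 1 + j)) = Module.finrank k (Q (i + j + 1)) := by
      rw [show i + 1 + j = i + j + 1 by ring]
    -- e1 : rank-nullity for dP (i+1) restricted to K := ker φ(i+1)
    have e1 : Module.finrank k (Submodule.map (dP (i + 1) v) (LinearMap.ker (φ (i + 1))))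
        + Module.finrank k (Submodule.comap (LinearMap.ker (φ (i + 1))).subtype
            (LinearMap.ker (dP (i + 1) v)))
        = Module.finrank k (LinearMap.ker (φ (i + 1))) := by
      have h := LinearMap.finrank_range_add_finrank_ker
        ((dP (i + 1) v).comp (LinearMap.ker (φ (i + 1))).subtype)
      rwa [LinearMap.range_comp, Submodule.range_subtype, LinearMap.ker_comp] at h
    -- e3 : rank-nullity for φ (i+1) restricted to R := range (dP i v)
    have e3 : Module.finrank k (Submodule.map (φ (i + 1)) (LinearMap.range (dP i v)))
        + Module.finrank k (Submodule.comap (LinearMap.range (dP i v)).subtype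
            (LinearMap.ker (φ (i + 1))))
        = Module.finrank k (LinearMap.range (dP i v)) := by
      have h := LinearMap.finrank_range_add_finrank_ker
        ((φ (i + 1)).comp (LinearMap.range (dP i v)).subtype)
      rwa [LinearMap.range_comp, Submodule.range_subtype, LinearMap.ker_comp] at h
    -- e4 : identify the two kernels
    have e4 : Module.finrank k (Submodule.comap (LinearMap.ker (φ (i + 1))).subtype
            (LinearMap.ker (dP (i + 1) v)))
        = Module.finrank k (Submodule.comap (LinearMap.range (dP i v)).subtype
            (LinearMap.ker (φ (i + 1)))) := by
      rw [hker]
      have h1 : Submodule.comap (LinearMap.ker (φ (i + 1))).subtype (LinearMap.range (dP i v))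
          = Submodule.comap (LinearMap.ker (φ (i + 1))).subtype
              (LinearMap.range (dP i v) ⊓ LinearMap.ker (φ (i + 1))) := by
        ext x; simp [Submodule.mem_comap, x.2]
      have h2 : Submodule.comap (LinearMap.range (dP i v)).subtype (LinearMap.ker (φ (i + 1)))
          = Submodule.comap (LinearMap.range (dP i v)).subtype
              (LinearMap.range (dP i v) ⊓ LinearMap.ker (φ (i + 1))) := by
        ext x; simp [Submodule.mem_comap, x.2]
      rw [h1, h2,
        (Submodule.comapSubtypeEquivOfLe (inf_le_right :
          LinearMap.range (dP i v) ⊓ LinearMap.ker (φ (i + 1)) ≤ _)).finrank_eq,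
        (Submodule.comapSubtypeEquivOfLe (inf_le_left :
          LinearMap.range (dP i v) ⊓ LinearMap.ker (φ (i + 1)) ≤ _)).finrank_eq]
    -- e8 : the image of R under φ (i+1)
    have e8 : Module.finrank k (Submodule.map (φ (i + 1)) (LinearMap.range (dP i v)))
        = Module.finrank k (LinearMap.range (dQ (i + j) v)) := by
      have hcomp : (φ (i + 1)).comp (dP i v)
          = ((famCast k Q (show i + j + 1 = i + 1 + j by ring)).toLinearMap).comp
              ((dQ (i + j) v).comp (φ i)) := by
        ext x
        simp only [LinearMap.comp_apply, LinearEquiv.coe_coe]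
        rw [famCast_apply]
        exact hφ i v x
      rw [← LinearMap.range_comp, hcomp, LinearMap.range_comp, LinearMap.range_comp (φ i),
        LinearMap.range_eq_top.mpr hsi, Submodule.map_top]
      exact LinearEquiv.finrank_map_eq _ _
    -- the two telescoping sums
    have hfP : ∀ s : ℤ, Module.finrank k (P s)
        = Module.finrank k (LinearMap.range (dP s v))
          + Module.finrank k (LinearMap.range (dP (s - 1) v)) := by
      intro s
      obtain ⟨u, rfl⟩ : ∃ u : ℤ, s = u + 1 := ⟨s - 1, by ring⟩
      rw [show u + 1 - 1 = u by ring,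
        ← LinearMap.finrank_range_add_finrank_ker (dP (u + 1) v), hPe v hv u]
    have hrP : ∀ s : ℤ, 0 ≤ s → Module.finrank k (LinearMap.range (dP s v)) = 0 := by
      intro s hs
      have h1 : Module.finrank k (P (s + 1)) = 0 := hPtop (s + 1) (by omega)
      have h2 := Submodule.finrank_le (LinearMap.range (dP s v))
      omega
    have hfQ : ∀ s : ℤ, Module.finrank k (Q s)
        = Module.finrank k (LinearMap.range (dQ s v))
          + Module.finrank k (LinearMap.range (dQ (s - 1) v)) := by
      intro s
      obtain ⟨u, rfl⟩ : ∃ u : ℤ, s = u + 1 := ⟨s - 1, by ring⟩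
      rw [show u + 1 - 1 = u by ring,
        ← LinearMap.finrank_range_add_finrank_ker (dQ (u + 1) v), hQe v hv u]
    have hrQ : ∀ s : ℤ, 0 ≤ s → Module.finrank k (LinearMap.range (dQ s v)) = 0 := by
      intro s hs
      have h1 : Module.finrank k (Q (s + 1)) = 0 := hQtop (s + 1) (by omega)
      have h2 := Submodule.finrank_le (LinearMap.range (dQ s v))
      omega
    have hA : (∑' t : ℕ, (-1 : ℤ) ^ t * (Module.finrank k (P (i + 2 + t)) : ℤ))
        = (Module.finrank k (LinearMap.range (dP (i + 2 - 1) v)) : ℤ) :=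
      telescope_tsum (fun s => Module.finrank k (P s))
        (fun s => Module.finrank k (LinearMap.range (dP s v))) (i + 2) hfP hrP
    have hB : (∑' t : ℕ, (-1 : ℤ) ^ t * (Module.finrank k (Q (i + j + 2 + t)) : ℤ))
        = (Module.finrank k (LinearMap.range (dQ (i + j + 2 - 1) v)) : ℤ) :=
      telescope_tsum (fun s => Module.finrank k (Q s))
        (fun s => Module.finrank k (LinearMap.range (dQ s v))) (i + j + 2) hfQ hrQ
    rw [show (i + 2 - 1 : ℤ) = i + 1 by ring] at hA
    rw [show (i + j + 2 - 1 : ℤ) = i + j + 1 by ring] at hB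
    rw [hA, hB]
    omega
end

section
/- Let k be a field of characteristic 0 and V a k-vector space whose dimension n+1 is even, and let q be an even integer with 2 ≤ q ≤ n+1. Then there exists ω ∈ ⋀^q V such that for every integer p ≥ 0 the left multiplication map ⋀^p V → ⋀^{p+q} V, x ↦ ω ∧ x, has rank min( C(n+1, p), C(n+1, p+q) ); that is, the wedge multiplication by ω has maximal rank in every degree. (Hence a generic q-form, for q even and n+1 even, defines a contraction of maximal rank.) -/
/-!
Take a basis `e₀, …, e_{2N-1}` of `V` and `ω = σ ^ m` with `σ = ∑ᵢ e_{2i} ∧ e_{2i+1}`, so `q = 2m`.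
Letting each `eᵢ` act by the signed creation operator on functions on finite sets of indices
identifies `⋀ V` with `Finset (Fin 2N) → k`, the monomial `e_S` becoming the indicator of `S`
and `⋀ᵖ V` the functions supported on `p`-sets. Since `e_{2i}` and `e_{2i+1}` are adjacent,
`σ ∧ ·` becomes the sign-free operator `L` adding one of the pairs `{2i, 2i+1}`; its transpose
`Λ` for the dot product removes one, and on degree `p` they satisfy the `sl₂` relation
`[Λ, L] = N - p`. Induction on `p` and `m` then shows that `Lᵐ` is injective in degrees
`p ≤ N - m`. Complementation `S ↦ Sᶜ` conjugates `L` into `Λ`, so `Λᵐ` is injective in degrees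
`≥ N + m`, and by duality `Lᵐ` is surjective onto degree `p + 2m` whenever `p + m ≥ N`.
Either way `ω ∧ ·` has the rank of the smaller of the two exterior powers.
-/

open Finset

lemma Submodule.finrank_map_eq_min {k M M' : Type*} [Field k] [AddCommGroup M] [Module k M]
    [AddCommGroup M'] [Module k M'] {f : M →ₗ[k] M'} {P : Submodule k M} {Q : Submodule k M'}
    [FiniteDimensional k P] [FiniteDimensional k Q] (hPQ : P.map f ≤ Q)
    (h : Disjoint P (LinearMap.ker f) ∨ P.map f = Q) :
    Module.finrank k (P.map f) = min (Module.finrank k P) (Module.finrank k Q) := by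
  have hP := Submodule.finrank_map_le f P
  have hQ := Submodule.finrank_mono hPQ
  rcases h with h | h
  · have hinj : Module.finrank k (P.map f) = Module.finrank k P := by
      rw [← LinearMap.range_domRestrict]
      exact LinearMap.finrank_range_of_inj (LinearMap.injective_domRestrict_iff.2 h)
    omega
  · rw [h] at hP ⊢
    omega

lemma ExteriorAlgebra.map_mulLeft_exteriorPower_le {R M : Type*} [CommRing R] [AddCommGroup M]
    [Module R M] {ω : ExteriorAlgebra R M} {q : ℕ} (hω : ω ∈ ⋀[R]^q M) (p : ℕ) :
    (⋀[R]^p M).map (LinearMap.mulLeft R ω) ≤ ⋀[R]^(p + q) M := by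
  rintro _ ⟨x, hx, rfl⟩
  rw [add_comm]
  exact SetLike.mul_mem_graded hω hx

lemma mul_self_eq_zero_of_anticomm_basis {ι k V A : Type*} [Field k] [NeZero (2 : k)]
    [AddCommGroup V] [Module k V] [Ring A] [Algebra k A] (b : Module.Basis ι k V)
    (f : V →ₗ[k] A) (hf : ∀ i j, f (b i) * f (b j) + f (b j) * f (b i) = 0) (v : V) :
    f v * f v = 0 := by
  let B := (LinearMap.mul k A).compl₁₂ f f
  have hB : B + B.flip = 0 := LinearMap.ext_basis b b fun i j ↦ by simpa [B] using hf i j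
  have h2 : (2 : k) • (f v * f v) = 0 := by
    simpa [B, two_smul] using LinearMap.congr_fun₂ hB v v
  exact (smul_eq_zero.1 h2).resolve_left two_ne_zero

namespace Fock

section Operators

variable (k : Type*) {α : Type*} [CommRing k]

def homogeneous (α : Type*) (p : ℕ) : Submodule k (Finset α → k) where
  carrier := {f | ∀ S, #S ≠ p → f S = 0}
  add_mem' hf hg S hS := by simp [hf S hS, hg S hS]
  zero_mem' _ _ := rfl
  smul_mem' c f hf S hS := by simp [hf S hS]

variable {k}

lemma card_eq_of_mem_homogeneous {p : ℕ} {f : Finset α → k} (hf : f ∈ homogeneous k α p)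
    {S : Finset α} (hS : f S ≠ 0) : #S = p :=
  not_not.1 (mt (hf S) hS)

lemma homogeneous_eq_bot [Fintype α] {p : ℕ} (hp : Fintype.card α < p) :
    homogeneous k α p = ⊥ :=
  (Submodule.eq_bot_iff _).2 fun f hf ↦ funext fun S ↦
    hf S (by have := S.card_le_univ; omega)

variable [DecidableEq α]

def raise (P : Finset α) : (Finset α → k) →ₗ[k] (Finset α → k) where
  toFun f T := if P ⊆ T then f (T \ P) else 0
  map_add' f g := by funext T; by_cases h : P ⊆ T <;> simp [h]
  map_smul' c f := by funext T; by_cases h : P ⊆ T <;> simp [h]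

def lower (P : Finset α) : (Finset α → k) →ₗ[k] (Finset α → k) where
  toFun f S := if Disjoint P S then f (P ∪ S) else 0
  map_add' f g := by funext S; by_cases h : Disjoint P S <;> simp [h]
  map_smul' c f := by funext S; by_cases h : Disjoint P S <;> simp [h]

lemma raise_apply (P : Finset α) (f : Finset α → k) (T : Finset α) :
    raise P f T = if P ⊆ T then f (T \ P) else 0 := rfl

lemma lower_apply (P : Finset α) (f : Finset α → k) (S : Finset α) :
    lower P f S = if Disjoint P S then f (P ∪ S) else 0 := rfl

lemma raise_mem_homogeneous {P : Finset α} {p : ℕ} {f : Finset α → k}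
    (hf : f ∈ homogeneous k α p) : raise P f ∈ homogeneous k α (p + #P) := by
  intro T hT
  rw [raise_apply]
  split_ifs with hPT
  · exact hf _ (by rw [card_sdiff_of_subset hPT]; have := card_le_card hPT; omega)
  · rfl

lemma lower_mem_homogeneous {P : Finset α} {p : ℕ} {f : Finset α → k}
    (hf : f ∈ homogeneous k α (p + #P)) : lower P f ∈ homogeneous k α p := by
  intro S hS
  rw [lower_apply]
  split_ifs with hPS
  · exact hf _ (by rw [card_union_of_disjoint hPS]; omega)
  · rfl

lemma lower_eq_zero_of_lt {P : Finset α} {p : ℕ} {f : Finset α → k}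
    (hf : f ∈ homogeneous k α p) (hp : p < #P) : lower P f = 0 := by
  funext S
  rw [lower_apply]
  split_ifs with hPS
  · exact hf _ (by rw [card_union_of_disjoint hPS]; omega)
  · rfl

lemma lower_raise_of_disjoint {P Q : Finset α} (h : Disjoint P Q) (f : Finset α → k) :
    lower P (raise Q f) = raise Q (lower P f) := by
  funext S
  simp only [lower_apply, raise_apply]
  rw [union_sdiff_distrib, h.sdiff_eq_left]
  rw [disjoint_left] at h
  have hQ : Q ⊆ P ∪ S ↔ Q ⊆ S := by
    simp only [subset_iff, mem_union]; grind
  have hP : Disjoint P (S \ Q) ↔ Disjoint P S := by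
    simp only [disjoint_left, mem_sdiff]; grind
  simp only [hQ, hP]
  split_ifs <;> rfl

lemma lower_raise_self_apply (P : Finset α) (f : Finset α → k) (S : Finset α) :
    lower P (raise P f) S = if Disjoint P S then f S else 0 := by
  by_cases hPS : Disjoint P S <;>
    simp [lower_apply, raise_apply, hPS, union_sdiff_cancel_left]

lemma raise_lower_self_apply (P : Finset α) (f : Finset α → k) (S : Finset α) :
    raise P (lower P f) S = if P ⊆ S then f S else 0 := by
  by_cases hPS : P ⊆ S <;>
    simp [lower_apply, raise_apply, hPS, disjoint_sdiff, union_eq_right.2]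

lemma single_mem_homogeneous (S : Finset α) (c : k) :
    Pi.single S c ∈ homogeneous k α #S := fun _ hT ↦
  Pi.single_eq_of_ne (fun h ↦ hT (congrArg card h)) _

lemma ite_disjoint_sub_ite_subset {B S : Finset α} (hB : #B = 2) :
    ((if Disjoint B S then 1 else 0) - (if B ⊆ S then 1 else 0) : k) = 1 - #(B ∩ S) := by
  have hle : #(B ∩ S) ≤ 2 := hB ▸ card_le_card inter_subset_left
  have hdisj : Disjoint B S ↔ #(B ∩ S) = 0 := by
    rw [card_eq_zero, disjoint_iff_inter_eq_empty]
  have hsub : B ⊆ S ↔ #(B ∩ S) = 2 := by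
    rw [← inter_eq_left, ← hB]
    exact ⟨fun h ↦ by rw [h], eq_of_subset_of_card_le inter_subset_left ∘ ge_of_eq⟩
  simp only [hdisj, hsub]
  interval_cases #(B ∩ S) <;> norm_num

variable [Fintype α]

lemma eq_zero_of_forall_dotProduct_eq_zero {p : ℕ} {g : Finset α → k}
    (hg : g ∈ homogeneous k α p) (h : ∀ f ∈ homogeneous k α p, f ⬝ᵥ g = 0) : g = 0 := by
  funext S
  by_cases hS : #S = p
  · have := h _ (hS ▸ single_mem_homogeneous S 1)
    rwa [single_dotProduct, one_mul] at this
  · exact hg S hS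

lemma dotProduct_raise (P : Finset α) (f g : Finset α → k) :
    raise P f ⬝ᵥ g = f ⬝ᵥ lower P g := by
  simp only [dotProduct, raise_apply, lower_apply, ite_mul, zero_mul, mul_ite, mul_zero,
    ← sum_filter]
  refine sum_nbij' (· \ P) (P ∪ ·) ?_ ?_ ?_ ?_ ?_ <;> intro T hT <;>
    simp_all [disjoint_sdiff, union_sdiff_cancel_left, union_eq_right.2]

lemma funLeft_compl_mem_homogeneous {p : ℕ} {f : Finset α → k}
    (hf : f ∈ homogeneous k α p) :
    LinearMap.funLeft k k compl f ∈ homogeneous k α (Fintype.card α - p) := by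
  intro S hS
  refine hf Sᶜ fun h ↦ hS ?_
  have := S.card_le_univ
  rw [card_compl] at h
  omega

lemma funLeft_compl_funLeft_compl (f : Finset α → k) :
    LinearMap.funLeft k k compl (LinearMap.funLeft k k compl f) = f :=
  funext fun S ↦ by simp [LinearMap.funLeft_apply]

lemma funLeft_compl_raise_funLeft_compl (P : Finset α) (f : Finset α → k) :
    LinearMap.funLeft k k compl (raise P (LinearMap.funLeft k k compl f)) = lower P f := by
  funext S
  simp [LinearMap.funLeft_apply, raise_apply, lower_apply, subset_compl_iff_disjoint_right,
    sdiff_eq, union_comm]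

end Operators

section Fiber

variable {α ι : Type*} [Fintype α] [DecidableEq ι] (π : α → ι)

def fiber (i : ι) : Finset α := {a | π a = i}

variable {π}

lemma mem_fiber {i : ι} {a : α} : a ∈ fiber π i ↔ π a = i := by simp [fiber]

lemma disjoint_fiber {i j : ι} (h : i ≠ j) : Disjoint (fiber π i) (fiber π j) :=
  disjoint_left.2 fun _ hi hj ↦ h ((mem_fiber.1 hi).symm.trans (mem_fiber.1 hj))

lemma card_eq_two_mul_card [Fintype ι] (hπ : ∀ i, #(fiber π i) = 2) :
    Fintype.card α = 2 * Fintype.card ι := by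
  rw [← card_univ, card_eq_sum_card_fiberwise (f := π) (t := univ) fun a _ ↦ mem_univ _]
  exact (sum_congr rfl fun i _ ↦ hπ i).trans (by simp [mul_comm])

end Fiber

section Lefschetz

variable {k : Type*} {α ι : Type*} [CommRing k] [Fintype α] [DecidableEq α]
  [Fintype ι] [DecidableEq ι] (π : α → ι)

def lefschetz : Module.End k (Finset α → k) := ∑ i, raise (fiber π i)

def dualLefschetz : Module.End k (Finset α → k) := ∑ i, lower (fiber π i)

variable {π}

lemma lefschetz_apply (f : Finset α → k) :
    lefschetz π f = ∑ i, raise (fiber π i) f :=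
  LinearMap.sum_apply _ _ _

lemma dualLefschetz_apply (f : Finset α → k) :
    dualLefschetz π f = ∑ i, lower (fiber π i) f :=
  LinearMap.sum_apply _ _ _

lemma dotProduct_lefschetz_pow (m : ℕ) (f g : Finset α → k) :
    (lefschetz π ^ m) f ⬝ᵥ g = f ⬝ᵥ (dualLefschetz π ^ m) g := by
  induction m generalizing f with
  | zero => rfl
  | succ m ih =>
    rw [pow_succ, Module.End.mul_apply, ih, pow_succ', Module.End.mul_apply]
    simp only [lefschetz_apply, dualLefschetz_apply, sum_dotProduct, dotProduct_sum,
      dotProduct_raise]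

lemma funLeft_compl_lefschetz_pow_funLeft_compl (m : ℕ) (f : Finset α → k) :
    LinearMap.funLeft k k compl ((lefschetz π ^ m) (LinearMap.funLeft k k compl f)) =
      (dualLefschetz π ^ m) f := by
  induction m generalizing f with
  | zero => exact funLeft_compl_funLeft_compl f
  | succ m ih =>
    rw [pow_succ, Module.End.mul_apply, ← funLeft_compl_funLeft_compl (lefschetz π _), ih,
      pow_succ, Module.End.mul_apply, lefschetz_apply, dualLefschetz_apply, map_sum]
    simp only [funLeft_compl_raise_funLeft_compl]

variable (hπ : ∀ i, #(fiber π i) = 2)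
include hπ

lemma lefschetz_pow_mem_homogeneous {p : ℕ} {f : Finset α → k} (hf : f ∈ homogeneous k α p)
    (m : ℕ) : (lefschetz π ^ m) f ∈ homogeneous k α (p + 2 * m) := by
  induction m with
  | zero => simpa using hf
  | succ m ih =>
    rw [pow_succ', Module.End.mul_apply, lefschetz_apply, mul_add_one, ← add_assoc]
    refine Submodule.sum_mem _ fun i _ ↦ ?_
    have h := raise_mem_homogeneous (P := fiber π i) ih
    rwa [hπ i] at h

lemma dualLefschetz_mem_homogeneous {p : ℕ} {f : Finset α → k}
    (hf : f ∈ homogeneous k α (p + 2)) : dualLefschetz π f ∈ homogeneous k α p := by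
  rw [dualLefschetz_apply]
  exact Submodule.sum_mem _ fun i _ ↦ lower_mem_homogeneous (hπ i ▸ hf)

lemma dualLefschetz_eq_zero_of_lt {p : ℕ} {f : Finset α → k} (hf : f ∈ homogeneous k α p)
    (hp : p < 2) : dualLefschetz π f = 0 := by
  rw [dualLefschetz_apply]
  exact sum_eq_zero fun i _ ↦ lower_eq_zero_of_lt hf (hπ i ▸ hp)

lemma sum_ite_disjoint_sub_ite_subset (S : Finset α) :
    ∑ i, ((if Disjoint (fiber π i) S then 1 else 0) -
      (if fiber π i ⊆ S then 1 else 0) : k) = Fintype.card ι - #S := by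
  have hS : #S = ∑ i, #(fiber π i ∩ S) := by
    rw [card_eq_sum_card_fiberwise (f := π) (t := univ) fun a _ ↦ mem_univ _]
    refine sum_congr rfl fun i _ ↦ congrArg card ?_
    ext a
    simp [mem_fiber, and_comm]
  simp [ite_disjoint_sub_ite_subset (hπ _), sum_sub_distrib, hS]

lemma dualLefschetz_lefschetz_sub {p : ℕ} {f : Finset α → k} (hf : f ∈ homogeneous k α p) :
    dualLefschetz π (lefschetz π f) - lefschetz π (dualLefschetz π f) =
      ((Fintype.card ι : k) - p) • f := by
  have hdiag : dualLefschetz π (lefschetz π f) - lefschetz π (dualLefschetz π f) =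
      ∑ i, (lower (fiber π i) (raise (fiber π i) f) -
        raise (fiber π i) (lower (fiber π i) f)) := by
    simp only [lefschetz_apply, dualLefschetz_apply, map_sum]
    rw [sum_comm (s := univ) (t := univ) (f := fun j i ↦ raise (fiber π i) (lower (fiber π j) f)),
      ← sum_sub_distrib]
    refine sum_congr rfl fun i _ ↦ ?_
    rw [← sum_sub_distrib, sum_eq_single i (fun j _ hji ↦ ?_) (by simp)]
    rw [lower_raise_of_disjoint (disjoint_fiber hji), sub_self]
  funext S
  rw [hdiag]
  simp only [Finset.sum_apply, Pi.sub_apply, lower_raise_self_apply, raise_lower_self_apply,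
    Pi.smul_apply, smul_eq_mul]
  by_cases hS : f S = 0
  · simp [hS]
  have hterm : ∀ i, ((if Disjoint (fiber π i) S then f S else 0) -
      if fiber π i ⊆ S then f S else 0) =
      ((if Disjoint (fiber π i) S then 1 else 0) - (if fiber π i ⊆ S then 1 else 0)) * f S :=
    fun i ↦ by split_ifs <;> ring
  rw [sum_congr rfl fun i _ ↦ hterm i, ← sum_mul, sum_ite_disjoint_sub_ite_subset hπ,
    card_eq_of_mem_homogeneous hf hS]

lemma dualLefschetz_pow_mem_homogeneous {p m : ℕ} {f : Finset α → k}
    (hf : f ∈ homogeneous k α (p + 2 * m)) : (dualLefschetz π ^ m) f ∈ homogeneous k α p := by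
  induction m generalizing f with
  | zero => simpa using hf
  | succ m ih =>
    rw [pow_succ, Module.End.mul_apply]
    exact ih (dualLefschetz_mem_homogeneous hπ (by rwa [add_assoc, ← mul_add_one]))

lemma dualLefschetz_lefschetz_pow {p : ℕ} {f : Finset α → k} (hf : f ∈ homogeneous k α p)
    (m : ℕ) : dualLefschetz π ((lefschetz π ^ (m + 1)) f) =
      (lefschetz π ^ (m + 1)) (dualLefschetz π f) +
        (((m : k) + 1) * (Fintype.card ι - p - m)) • (lefschetz π ^ m) f := by
  have hcomm {q : ℕ} {g : Finset α → k} (hg : g ∈ homogeneous k α q) :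
      dualLefschetz π (lefschetz π g) =
        lefschetz π (dualLefschetz π g) + ((Fintype.card ι : k) - q) • g :=
    eq_add_of_sub_eq' (dualLefschetz_lefschetz_sub hπ hg)
  induction m with
  | zero => simpa using hcomm hf
  | succ m ih =>
    rw [pow_succ' _ (m + 1), Module.End.mul_apply,
      hcomm (lefschetz_pow_mem_homogeneous hπ hf _), ih, map_add, map_smul,
      ← Module.End.mul_apply, ← pow_succ', ← Module.End.mul_apply (lefschetz π), ← pow_succ']
    push_cast
    module

end Lefschetz

section Injectivity

variable {k : Type*} {α ι : Type*} [Field k] [CharZero k] [Fintype α] [DecidableEq α]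
  [Fintype ι] [DecidableEq ι] {π : α → ι} (hπ : ∀ i, #(fiber π i) = 2)
include hπ

theorem eq_zero_of_lefschetz_pow_eq_zero {p n : ℕ} (hpn : p + n ≤ Fintype.card ι)
    {f : Finset α → k} (hf : f ∈ homogeneous k α p) (h : (lefschetz π ^ n) f = 0) : f = 0 := by
  induction p using Nat.strong_induction_on generalizing n f with
  | _ p ihp =>
  induction n generalizing f with
  | zero => simpa using h
  | succ n ihn =>
    have key := dualLefschetz_lefschetz_pow hπ hf n
    rw [h, map_zero] at key
    have hΛ : dualLefschetz π f = 0 := by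
      rcases lt_or_ge p 2 with hp | hp
      · exact dualLefschetz_eq_zero_of_lt hπ hf hp
      obtain ⟨p, rfl⟩ : ∃ p', p = p' + 2 := ⟨p - 2, by omega⟩
      refine ihp p (by omega) (n := n + 2) (by omega) (dualLefschetz_mem_homogeneous hπ hf) ?_
      have := congrArg (lefschetz π) key
      rwa [map_zero, map_add, map_smul, ← Module.End.mul_apply, ← pow_succ',
        ← Module.End.mul_apply (lefschetz π), ← pow_succ', h, smul_zero, add_zero, eq_comm] at this
    rw [hΛ, map_zero, zero_add, eq_comm, smul_eq_zero] at key
    refine ihn (by omega) hf (key.resolve_left (mul_ne_zero (Nat.cast_add_one_ne_zero n) ?_))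
    rw [sub_sub, ← Nat.cast_add, sub_ne_zero, Ne, Nat.cast_inj]
    omega

theorem eq_zero_of_dualLefschetz_pow_eq_zero {j m : ℕ} (hjm : Fintype.card ι + m ≤ j)
    {g : Finset α → k} (hg : g ∈ homogeneous k α j) (h : (dualLefschetz π ^ m) g = 0) :
    g = 0 := by
  have hcard := card_eq_two_mul_card hπ
  rcases le_or_gt j (Fintype.card α) with hj | hj
  · have hCg : LinearMap.funLeft k k compl g = 0 := by
      refine eq_zero_of_lefschetz_pow_eq_zero hπ (n := m) (by omega)
        (funLeft_compl_mem_homogeneous hg) ?_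
      rw [← funLeft_compl_funLeft_compl ((lefschetz π ^ m) _),
        funLeft_compl_lefschetz_pow_funLeft_compl, h, map_zero]
    rw [← funLeft_compl_funLeft_compl g, hCg, map_zero]
  · rw [homogeneous_eq_bot hj] at hg
    exact hg

theorem map_lefschetz_pow_homogeneous {p m : ℕ} (hpm : Fintype.card ι ≤ p + m) :
    (homogeneous k α p).map (lefschetz π ^ m) = homogeneous k α (p + 2 * m) := by
  set I := (homogeneous k α p).map (lefschetz π ^ m)
  refine Submodule.eq_of_le_of_finrank_le
    (Submodule.map_le_iff_le_comap.2 fun f hf ↦ lefschetz_pow_mem_homogeneous hπ hf m) ?_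
  let Θ : homogeneous k α (p + 2 * m) →ₗ[k] Module.Dual k I :=
    ((dotProductBilin k k).domRestrict₁₂ I _).flip
  have hΘ : Function.Injective Θ := by
    rw [← LinearMap.ker_eq_bot, eq_bot_iff]
    intro g hg
    rw [Submodule.mem_bot, Subtype.ext_iff]
    refine eq_zero_of_dualLefschetz_pow_eq_zero hπ (by omega) g.2
      (eq_zero_of_forall_dotProduct_eq_zero (dualLefschetz_pow_mem_homogeneous hπ g.2)
        fun f hf ↦ ?_)
    rw [← dotProduct_lefschetz_pow]
    exact LinearMap.congr_fun hg ⟨_, Submodule.mem_map_of_mem hf⟩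
  calc Module.finrank k (homogeneous k α (p + 2 * m))
      ≤ Module.finrank k (Module.Dual k I) := LinearMap.finrank_le_finrank_of_injective hΘ
    _ = Module.finrank k I := Subspace.dual_finrank_eq

end Injectivity

section Creation

variable {k : Type*} [CommRing k] {I : Type*} [LinearOrder I]

def creation (i : I) : Module.End k (Finset I → k) where
  toFun f T := if i ∈ T then (-1) ^ #{j ∈ T | j < i} * f (T.erase i) else 0
  map_add' f g := by funext T; by_cases h : i ∈ T <;> simp [h, mul_add]
  map_smul' c f := by funext T; by_cases h : i ∈ T <;> simp [h, mul_left_comm]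

lemma creation_apply (i : I) (f : Finset I → k) (T : Finset I) :
    creation i f T = if i ∈ T then (-1) ^ #{j ∈ T | j < i} * f (T.erase i) else 0 := rfl

lemma creation_mul_creation_self (i : I) : creation i * creation i = (0 : Module.End k _) := by
  refine LinearMap.ext fun f ↦ funext fun T ↦ ?_
  simp [creation_apply]

lemma creation_mul_creation_add_of_lt {i j : I} (hij : i < j) :
    creation i * creation j + creation j * creation i = (0 : Module.End k _) := by
  refine LinearMap.ext fun f ↦ funext fun T ↦ ?_
  by_cases hT : i ∈ T ∧ j ∈ T
  · obtain ⟨hi, hj⟩ := hT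
    have hcj : #{x ∈ T.erase i | x < j} + 1 = #{x ∈ T | x < j} := by
      rw [filter_erase, card_erase_add_one (mem_filter.2 ⟨hi, hij⟩)]
    have hci : #{x ∈ T.erase j | x < i} = #{x ∈ T | x < i} := by
      rw [filter_erase, erase_eq_of_notMem (by simp [hij.le.not_gt])]
    simp only [LinearMap.add_apply, Module.End.mul_apply, Pi.add_apply, creation_apply,
      mem_erase, hi, hj, hij.ne, hij.ne', ne_eq, not_false_eq_true, and_self, if_true,
      LinearMap.zero_apply, Pi.zero_apply]
    rw [← hcj, hci, erase_right_comm, pow_succ]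
    ring
  · rw [not_and_or] at hT
    rcases hT with h | h <;> simp [creation_apply, h]

lemma creation_anticomm (i j : I) :
    creation i * creation j + creation j * creation i = (0 : Module.End k _) := by
  rcases lt_trichotomy i j with hij | rfl | hij
  · exact creation_mul_creation_add_of_lt hij
  · rw [creation_mul_creation_self, add_zero]
  · rw [add_comm]
    exact creation_mul_creation_add_of_lt hij

lemma creation_single_of_forall_lt {i : I} {T : Finset I} (h : ∀ j ∈ T, i < j) :
    creation i (Pi.single T (1 : k)) = Pi.single (insert i T) 1 := by
  have hiT : i ∉ T := fun hi ↦ lt_irrefl i (h i hi)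
  funext U
  rw [creation_apply]
  by_cases hU : U = insert i T
  · subst hU
    have hc : #{j ∈ insert i T | j < i} = 0 := by
      simpa [filter_insert] using fun j hj ↦ (h j hj).le
    simp [hc, erase_insert hiT]
  · by_cases hiU : i ∈ U
    · have hne : U.erase i ≠ T := fun hUe ↦ hU (by rw [← hUe, insert_erase hiU])
      simp [hiU, hU, hne]
    · simp [hiU, hU]

lemma creation_mul_creation_of_covBy {i j : I} (h : i ⋖ j) :
    creation i * creation j = (raise {i, j} : Module.End k (Finset I → k)) := by
  refine LinearMap.ext fun f ↦ funext fun T ↦ ?_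
  -- no element of `T` lies strictly between `i` and `j`, so the two signs cancel
  have hc : #{x ∈ T.erase i | x < j} = #{x ∈ T | x < i} := by
    congr 1
    ext x
    simp only [mem_filter, mem_erase]
    exact ⟨fun ⟨⟨hxi, hx⟩, hxj⟩ ↦ ⟨hx, (h.le_of_lt hxj).lt_of_ne hxi⟩,
      fun ⟨hx, hxi⟩ ↦ ⟨⟨hxi.ne, hx⟩, hxi.trans h.lt⟩⟩
  have hsdiff : T \ {i, j} = (T.erase i).erase j := by
    rw [sdiff_insert, sdiff_singleton_eq_erase, erase_right_comm]
  by_cases hi : i ∈ T <;> by_cases hj : j ∈ T <;>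
    simp [Module.End.mul_apply, creation_apply, raise_apply, insert_subset_iff, hi, hj, h.lt.ne',
      hc, hsdiff, ← mul_assoc, ← mul_pow]

end Creation

section Representation

open ExteriorAlgebra

variable {k V I : Type*} [Field k] [NeZero (2 : k)] [AddCommGroup V] [Module k V]
  [LinearOrder I] (b : Module.Basis I k V)

noncomputable def rep : ExteriorAlgebra k V →ₐ[k] Module.End k (Finset I → k) :=
  ExteriorAlgebra.lift k ⟨b.constr k creation,
    mul_self_eq_zero_of_anticomm_basis b _ fun i j ↦ by simpa using creation_anticomm i j⟩

lemma rep_ι_basis (i : I) : rep b (ι k (b i)) = creation i := by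
  simp [rep]

noncomputable def ofExteriorAlgebra : ExteriorAlgebra k V →ₗ[k] (Finset I → k) :=
  LinearMap.applyₗ (Pi.single ∅ 1) ∘ₗ (rep b).toLinearMap

lemma ofExteriorAlgebra_mul (x y : ExteriorAlgebra k V) :
    ofExteriorAlgebra b (x * y) = rep b x (ofExteriorAlgebra b y) := by
  simp [ofExteriorAlgebra]

lemma ofExteriorAlgebra_ιMulti {n : ℕ} {v : Fin n → I} (hv : StrictMono v) :
    ofExteriorAlgebra b (ιMulti k n (b ∘ v)) = Pi.single (univ.image v) 1 := by
  induction n with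
  | zero => simp [ofExteriorAlgebra]
  | succ n ih =>
    have htail : Matrix.vecTail (b ∘ v) = b ∘ (v ∘ Fin.succ) := rfl
    have himage : univ.image v = insert (v 0) (univ.image (v ∘ Fin.succ)) := by
      ext x
      simp [Fin.exists_fin_succ, eq_comm]
    rw [ιMulti_succ_apply, ofExteriorAlgebra_mul, htail, ih (hv.comp (Fin.strictMono_succ)),
      Function.comp_apply, rep_ι_basis, himage, creation_single_of_forall_lt]
    simp only [mem_image, mem_univ, true_and, Function.comp_apply, forall_exists_index]
    rintro _ j rfl
    exact hv (Fin.succ_pos j)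

lemma ofExteriorAlgebra_ιMulti_family {n : ℕ} (s : Set.powersetCard I n) :
    ofExteriorAlgebra b (ιMulti_family k n b s) = Pi.single (s : Finset I) 1 := by
  rw [ιMulti_family, Set.powersetCard.ofFinEmbEquiv_symm_apply]
  conv_rhs => rw [← image_orderEmbOfFin_univ _ (Set.powersetCard.card_eq s)]
  exact ofExteriorAlgebra_ιMulti b (orderEmbOfFin _ _).strictMono

lemma ofExteriorAlgebra_injective [Finite I] : Function.Injective (ofExteriorAlgebra b) := by
  have h : ofExteriorAlgebra b =
      b.ExteriorAlgebra.equiv (Pi.basisFun k (Finset I)) (Equiv.refl _) :=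
    b.ExteriorAlgebra.ext fun s ↦ by
      rw [LinearEquiv.coe_coe, Module.Basis.equiv_apply, Pi.basisFun_apply,
        ExteriorAlgebra.basis_apply]
      exact ofExteriorAlgebra_ιMulti_family b _
  rw [h]
  exact LinearEquiv.injective _

lemma map_ofExteriorAlgebra_exteriorPower [Fintype I] (p : ℕ) :
    (⋀[k]^p V).map (ofExteriorAlgebra b) = homogeneous k I p := by
  rw [← exteriorPower.ιMulti_family_span_fixedDegree_of_span k b.span_eq, Submodule.map_span,
    ← Set.range_comp]
  refine le_antisymm (Submodule.span_le.2 ?_) fun f hf ↦ ?_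
  · rintro _ ⟨s, rfl⟩
    have h := single_mem_homogeneous (k := k) (s : Finset I) 1
    rwa [Set.powersetCard.card_eq, ← ofExteriorAlgebra_ιMulti_family b] at h
  · rw [← univ_sum_single f]
    refine Submodule.sum_mem _ fun S _ ↦ ?_
    by_cases hS : #S = p
    · rw [← mul_one (f S), ← smul_eq_mul, Pi.single_smul]
      refine Submodule.smul_mem _ _ (Submodule.subset_span ⟨Set.powersetCard.ofCard hS, ?_⟩)
      exact ofExteriorAlgebra_ιMulti_family b _
    · rw [hf S hS, Pi.single_zero]
      exact Submodule.zero_mem _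

end Representation

section Symplectic

open ExteriorAlgebra

variable {k V : Type*} [Field k] [AddCommGroup V] [Module k V] {N : ℕ}
  (b : Module.Basis (Fin (N * 2)) k V)

noncomputable def symplecticForm : ExteriorAlgebra k V :=
  ∑ i : Fin N, ι k (b ⟨2 * i, by omega⟩) * ι k (b ⟨2 * i + 1, by omega⟩)

lemma symplecticForm_pow_mem_exteriorPower (m : ℕ) :
    symplecticForm b ^ m ∈ ⋀[k]^(2 * m) V := by
  have h : symplecticForm b ∈ ⋀[k]^2 V := Submodule.sum_mem _ fun i _ ↦ by
    rw [exteriorPower, pow_two]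
    exact Submodule.mul_mem_mul ⟨_, rfl⟩ ⟨_, rfl⟩
  simpa [mul_comm] using SetLike.pow_mem_graded m h

lemma fiber_divNat (i : Fin N) :
    fiber Fin.divNat i = ({⟨2 * i, by omega⟩, ⟨2 * i + 1, by omega⟩} : Finset (Fin (N * 2))) := by
  ext x
  simp only [mem_fiber, Fin.ext_iff, Fin.coe_divNat, mem_insert, mem_singleton]
  omega

lemma card_fiber_divNat (i : Fin N) : #(fiber (Fin.divNat (n := 2)) i) = 2 := by
  rw [fiber_divNat, card_pair (by simp [Fin.ext_iff])]

variable [NeZero (2 : k)]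

lemma ofExteriorAlgebra_symplecticForm_pow_mul (m : ℕ) (x : ExteriorAlgebra k V) :
    ofExteriorAlgebra b (symplecticForm b ^ m * x) =
      (lefschetz Fin.divNat ^ m) (ofExteriorAlgebra b x) := by
  have h : rep b (symplecticForm b) = lefschetz Fin.divNat := by
    simp only [symplecticForm, map_sum, map_mul, rep_ι_basis, lefschetz, fiber_divNat]
    refine sum_congr rfl fun i _ ↦ creation_mul_creation_of_covBy
      ⟨Fin.mk_lt_mk.2 (Nat.lt_succ_self _), fun c h₁ h₂ ↦ ?_⟩
    rw [Fin.lt_def] at h₁ h₂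
    simp only at h₁ h₂
    omega
  rw [ofExteriorAlgebra_mul, map_pow, h]

variable [CharZero k]

theorem disjoint_exteriorPower_ker_mulLeft_symplecticForm_pow {p m : ℕ} (h : p + m ≤ N) :
    Disjoint (⋀[k]^p V) (LinearMap.ker (LinearMap.mulLeft k (symplecticForm b ^ m))) := by
  refine (Submodule.disjoint_def).2 fun x hx hker ↦ ofExteriorAlgebra_injective b ?_
  rw [map_zero]
  refine eq_zero_of_lefschetz_pow_eq_zero card_fiber_divNat (by simpa using h)
    (map_ofExteriorAlgebra_exteriorPower b p ▸ Submodule.mem_map_of_mem hx) ?_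
  rw [← ofExteriorAlgebra_symplecticForm_pow_mul]
  exact (congrArg (ofExteriorAlgebra b) (LinearMap.mem_ker.1 hker)).trans (map_zero _)

theorem map_mulLeft_symplecticForm_pow_exteriorPower {p m : ℕ} (h : N ≤ p + m) :
    (⋀[k]^p V).map (LinearMap.mulLeft k (symplecticForm b ^ m)) = ⋀[k]^(p + 2 * m) V := by
  refine Submodule.map_injective_of_injective (ofExteriorAlgebra_injective b) ?_
  have hcomm : ofExteriorAlgebra b ∘ₗ LinearMap.mulLeft k (symplecticForm b ^ m) =
      (lefschetz Fin.divNat ^ m) ∘ₗ ofExteriorAlgebra b :=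
    LinearMap.ext (ofExteriorAlgebra_symplecticForm_pow_mul b m)
  rw [← Submodule.map_comp, hcomm, Submodule.map_comp, map_ofExteriorAlgebra_exteriorPower,
    map_ofExteriorAlgebra_exteriorPower,
    map_lefschetz_pow_homogeneous card_fiber_divNat (by simpa using h)]

end Symplectic

end Fock

open ExteriorAlgebra

theorem exists_even_form_maximal_rank_contraction_general
    (k : Type*) [Field k] [CharZero k]
    (V : Type*) [AddCommGroup V] [Module k V] [FiniteDimensional k V]
    (n q : ℕ) (hdim : Module.finrank k V = n + 1) (hneven : Even (n + 1))
    (hqeven : Even q) :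
    ∃ ω ∈ ⋀[k]^q V, ∀ p : ℕ,
      Module.finrank k ↥(Submodule.map (LinearMap.mulLeft k ω) (⋀[k]^p V)) =
        min (Nat.choose (n + 1) p) (Nat.choose (n + 1) (p + q)) := by
  obtain ⟨N, hN⟩ := hneven
  obtain ⟨m, rfl⟩ := hqeven
  let b : Module.Basis (Fin (N * 2)) k V := Module.finBasisOfFinrankEq k V (by omega)
  have hω := Fock.symplecticForm_pow_mem_exteriorPower b m
  rw [← two_mul]
  refine ⟨_, hω, fun p ↦ ?_⟩
  rw [← hdim, ← exteriorPower.finrank_eq, ← exteriorPower.finrank_eq]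
  refine Submodule.finrank_map_eq_min (map_mulLeft_exteriorPower_le hω p) ?_
  rcases le_or_gt (p + m) N with h | h
  · exact .inl (Fock.disjoint_exteriorPower_ker_mulLeft_symplecticForm_pow b h)
  · exact .inr (Fock.map_mulLeft_symplecticForm_pow_exteriorPower b h.le)

/-- Let `V` be a vector space of even dimension `n+1` over a field of characteristic `0`
and let `q` be even with `2 ≤ q ≤ n+1`.  Then there exists `ω ∈ ⋀^q V` such that for
every `p ≥ 0` the left multiplication `⋀^p V → ⋀^{p+q} V`, `x ↦ ω ∧ x`, has maximal rank
`min (C(n+1, p)) (C(n+1, p+q))`. -/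
theorem exists_even_form_maximal_rank_contraction
    (k : Type*) [Field k] [CharZero k]
    (V : Type*) [AddCommGroup V] [Module k V] [FiniteDimensional k V]
    (n q : ℕ) (hdim : Module.finrank k V = n + 1) (hneven : Even (n + 1))
    (hq : 2 ≤ q) (hqeven : Even q) (hqle : q ≤ n + 1) :
    ∃ ω ∈ ⋀[k]^q V, ∀ p : ℕ,
      Module.finrank k ↥(Submodule.map (LinearMap.mulLeft k ω) (⋀[k]^p V)) =
        min (Nat.choose (n + 1) p) (Nat.choose (n + 1) (p + q)) :=
  exists_even_form_maximal_rank_contraction_general k V n q hdim hneven hqeven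
end

section
/- Let k be a field, V a k-vector space of dimension n+1, and let j ≥ 1 and a ≥ 0 be integers with a + 2 ≤ n + 1. Fix ω ∈ ⋀^j V and, for each m ≥ j, let c_m : ⋀^m V^* → ⋀^{m−j} V^* be the transpose of the wedge multiplication map ⋀^{m−j} V → ⋀^m V, y ↦ ω ∧ y (the contraction by ω). For v ∈ V let ι_v : ⋀^m V^* → ⋀^{m−1} V^* denote the transpose of the wedge multiplication map y ↦ v ∧ y (the Koszul differential, contraction by v). Assume that c_{a+1} and c_{a+2} are surjective. Then for every nonzero v ∈ V, ι_v maps ker c_{a+1} into ker c_a, and the induced k-linear map ker c_{a+1} → ker c_a has rank C(n, a) − C(n, a−j) (with the convention C(n, a−j) = 0 if a < j). In particular, v ↦ ι_v|_{ker c_{a+1}} is a matrix of linear forms in n+1 variables of constant rank C(n, a) − C(n, a−j), with source of dimension C(n+1, a+1) − C(n+1, a+1−j). -/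
/-!
Write `E_m = ⋀^m V`, `L = v ∧ · : E_a → E_{a+1}` and `W = ω ∧ · : E_{a+1-j} → E_{a+1}`, so that
`ι_v = Lᵀ` and `c_{a+1} = Wᵀ`; surjectivity of `c_{a+1}` and `c_{a+2}` says that `ω ∧ ·` is
injective on `E_{a+1-j}` and `E_{a+2-j}`. Since `ker Wᵀ` is the annihilator of `range W`, its image
under `Lᵀ` has dimension `dim (range L) - dim (range L ⊓ range W)`.

For `v ≠ 0` the Koszul complex `(E_•, v ∧ ·)` is exact, so `dim (range L) = C(n, a)` and
`range L = ker (v ∧ ·)`. As `v ∧ ω ∧ y = ± ω ∧ v ∧ y` and `ω ∧ ·` is injective on `E_{a+2-j}`,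
`range L ⊓ range W = ω ∧ ker (v ∧ · on E_{a+1-j})`, of dimension `C(n, a - j)` (or `0` if `a < j`).
-/

open ExteriorAlgebra

variable (k : Type*) [Field k] (V : Type*) [AddCommGroup V] [Module k V]

/-- The contraction `c_m : (⋀^m V)^* → (⋀^{m−j} V)^*` by an element `ω ∈ ⋀^j V`:
the transpose (dual map) of the wedge multiplication `⋀^{m−j} V → ⋀^m V`, `y ↦ ω ∧ y`.
For `m < j` it is the zero map (the target being the dual of `⋀^{m−j} V` with
truncated subtraction). -/
noncomputable def contractionBy (j : ℕ) (ω : ExteriorAlgebra k V) (hω : ω ∈ ⋀[k]^j V)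
    (m : ℕ) :
    Module.Dual k ↥(⋀[k]^m V) →ₗ[k] Module.Dual k ↥(⋀[k]^(m - j) V) :=
  if h : j ≤ m then
    LinearMap.dualMap
      ((LinearMap.mulLeft k ω).restrict
        (p := ⋀[k]^(m - j) V) (q := ⋀[k]^m V)
        (fun x hx => by
          have h2 : ω * x ∈ ⋀[k]^(j + (m - j)) V := SetLike.mul_mem_graded hω hx
          rwa [Nat.add_sub_cancel' h] at h2))
  else 0

/-- The Koszul differential `ι_v : (⋀^{a+1} V)^* → (⋀^a V)^*` (contraction by `v ∈ V`):
the transpose (dual map) of the wedge multiplication `⋀^a V → ⋀^{a+1} V`, `y ↦ v ∧ y`. -/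
noncomputable def koszulContraction (v : V) (a : ℕ) :
    Module.Dual k ↥(⋀[k]^(a + 1) V) →ₗ[k] Module.Dual k ↥(⋀[k]^a V) :=
  LinearMap.dualMap
    ((LinearMap.mulLeft k (ι k v)).restrict
      (p := ⋀[k]^a V) (q := ⋀[k]^(a + 1) V)
      (fun x hx => by
        have h1 : ι k v ∈ ⋀[k]^1 V := by
          show ι k v ∈ LinearMap.range (ι k : V →ₗ[k] ExteriorAlgebra k V) ^ 1
          rw [pow_one]; exact LinearMap.mem_range_self _ v
        have h2 : (ι k v) * x ∈ ⋀[k]^(1 + a) V := SetLike.mul_mem_graded h1 hx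
        rwa [Nat.add_comm 1 a] at h2))

open Module

section LinearAlgebra

variable {K A B C : Type*} [Field K] [AddCommGroup A] [Module K A] [AddCommGroup B] [Module K B]
  [AddCommGroup C] [Module K C]

lemma Submodule.finrank_map_add_finrank_inf_ker [FiniteDimensional K A] (f : A →ₗ[K] B)
    (P : Submodule K A) :
    finrank K (P.map f) + finrank K (P ⊓ LinearMap.ker f : Submodule K A) = finrank K P := by
  have hker : (LinearMap.ker f).comap P.subtype = (P ⊓ LinearMap.ker f).comap P.subtype := by
    rw [Submodule.comap_inf, Submodule.comap_subtype_self, top_inf_eq]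
  have h := (f.domRestrict P).finrank_range_add_finrank_ker
  rwa [LinearMap.range_domRestrict, LinearMap.ker_domRestrict, hker,
    (Submodule.comapSubtypeEquivOfLe inf_le_left).finrank_eq] at h

lemma LinearMap.finrank_map_dualMap_ker_dualMap_add_finrank_inf [FiniteDimensional K C]
    (L : A →ₗ[K] C) (W : B →ₗ[K] C) :
    finrank K ((LinearMap.ker W.dualMap).map L.dualMap) +
        finrank K (LinearMap.range L ⊓ LinearMap.range W : Submodule K C) =
      finrank K (LinearMap.range L) := by
  rw [LinearMap.ker_dualMap_eq_dualAnnihilator_range]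
  have hmap :=
    Submodule.finrank_map_add_finrank_inf_ker L.dualMap (LinearMap.range W).dualAnnihilator
  rw [LinearMap.ker_dualMap_eq_dualAnnihilator_range, ← Submodule.dualAnnihilator_sup_eq,
    sup_comm] at hmap
  have hW := Subspace.finrank_add_finrank_dualAnnihilator_eq (LinearMap.range W)
  have hLW := Subspace.finrank_add_finrank_dualAnnihilator_eq
    (LinearMap.range L ⊔ LinearMap.range W)
  have hsup := Submodule.finrank_sup_add_finrank_inf_eq (LinearMap.range L) (LinearMap.range W)
  omega

end LinearAlgebra

namespace ExteriorAlgebra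

section Wedge

variable {k V}

lemma ι_mem_exteriorPower_one (v : V) : ι k v ∈ ⋀[k]^1 V := by
  simpa only [pow_one] using LinearMap.mem_range_self (ι k) v

noncomputable def wedgeLeft {d : ℕ} {w : ExteriorAlgebra k V} (hw : w ∈ ⋀[k]^d V) (p q : ℕ)
    (h : d + p = q) : ⋀[k]^p V →ₗ[k] ⋀[k]^q V :=
  (LinearMap.mulLeft k w).restrict fun _ hx => h ▸ SetLike.mul_mem_graded hw hx

@[simp]
lemma coe_wedgeLeft {d : ℕ} {w : ExteriorAlgebra k V} (hw : w ∈ ⋀[k]^d V) {p q : ℕ}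
    (h : d + p = q) (x : ⋀[k]^p V) : (wedgeLeft hw p q h x : ExteriorAlgebra k V) = w * x :=
  rfl

lemma injective_wedgeLeft_iff {d : ℕ} {w : ExteriorAlgebra k V} (hw : w ∈ ⋀[k]^d V) {p q : ℕ}
    (h : d + p = q) :
    Function.Injective (wedgeLeft hw p q h) ↔ ∀ x ∈ ⋀[k]^p V, w * x = 0 → x = 0 := by
  rw [← LinearMap.ker_eq_bot, LinearMap.ker_eq_bot']
  simp only [Subtype.ext_iff, coe_wedgeLeft, ZeroMemClass.coe_zero, Subtype.forall]

noncomputable def wedgeVec (v : V) (p : ℕ) : ⋀[k]^p V →ₗ[k] ⋀[k]^(p + 1) V :=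
  wedgeLeft (ι_mem_exteriorPower_one v) p (p + 1) (Nat.add_comm 1 p)

lemma ι_mul_eq_neg_one_pow_smul_mul {d : ℕ} {w : ExteriorAlgebra k V} (hw : w ∈ ⋀[k]^d V)
    (v : V) : ι k v * w = (-1 : k) ^ d • (w * ι k v) := by
  induction hw using Submodule.pow_induction_on_left' with
  | algebraMap r => simp [Algebra.commutes]
  | add x y i _ _ hx hy => simp [mul_add, add_mul, hx, hy]
  | mem_mul m hm i x _ ih =>
    obtain ⟨u, rfl⟩ := hm
    have hvu : ι k v * ι k u = -(ι k u * ι k v) := eq_neg_of_add_eq_zero_left (ι_add_mul_swap v u)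
    rw [← mul_assoc, hvu, neg_mul, mul_assoc, ih, mul_smul_comm, pow_succ, mul_neg_one, neg_smul,
      mul_assoc]

lemma contractLeft_mem_exteriorPower (f : Dual k V) {m : ℕ} {x : ExteriorAlgebra k V}
    (hx : x ∈ ⋀[k]^(m + 1) V) : CliffordAlgebra.contractLeft f x ∈ ⋀[k]^m V := by
  suffices ∀ i, ∀ x ∈ ⋀[k]^i V,
      CliffordAlgebra.contractLeft f x ∈ ⋀[k]^(i - 1) V ∧
        (i = 0 → CliffordAlgebra.contractLeft f x = 0) from (this _ x hx).1
  intro i x hx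
  induction hx using Submodule.pow_induction_on_left' with
  | algebraMap r => simp [CliffordAlgebra.contractLeft_algebraMap]
  | add x y i _ _ hx hy =>
    simp only [map_add]
    exact ⟨add_mem hx.1 hy.1, fun h => by rw [hx.2 h, hy.2 h, add_zero]⟩
  | mem_mul u hu i x hx ih =>
    obtain ⟨u, rfl⟩ := hu
    refine ⟨?_, fun h => absurd h i.succ_ne_zero⟩
    rw [CliffordAlgebra.contractLeft_ι_mul]
    refine sub_mem (Submodule.smul_mem _ _ hx) ?_
    rcases i with _ | i
    · rw [ih.2 rfl, mul_zero]
      exact zero_mem _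
    · simpa [Nat.add_comm 1 i] using SetLike.mul_mem_graded (ι_mem_exteriorPower_one u) ih.1

/-- Exactness of the Koszul complex `x ↦ v ∧ x` for `v ≠ 0`: a contraction `φ` with `φ v = 1`
is a homotopy, since `φ ⌋ (v ∧ x) = x - v ∧ (φ ⌋ x)`. -/
lemma ker_wedgeVec_succ {v : V} (hv : v ≠ 0) (p : ℕ) :
    LinearMap.ker (wedgeVec v (p + 1)) = LinearMap.range (wedgeVec (k := k) v p) := by
  obtain ⟨φ, hφ⟩ := Projective.exists_dual_eq_one k hv
  refine le_antisymm (fun x hx => ?_) ?_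
  · have hvx : ι k v * (x : ExteriorAlgebra k V) = 0 := congrArg Subtype.val hx
    have h := CliffordAlgebra.contractLeft_ι_mul φ v (x : ExteriorAlgebra k V)
    rw [hvx, map_zero, hφ, one_smul, eq_comm, sub_eq_zero] at h
    exact ⟨⟨_, contractLeft_mem_exteriorPower φ x.2⟩, Subtype.ext h.symm⟩
  · rintro _ ⟨y, rfl⟩
    exact Subtype.ext (by simp [wedgeVec, ← mul_assoc])

lemma ker_wedgeVec_zero {v : V} (hv : v ≠ 0) : LinearMap.ker (wedgeVec (k := k) v 0) = ⊥ := by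
  rw [LinearMap.ker_eq_bot']
  rintro ⟨x, hx⟩ hvx
  obtain ⟨r, rfl⟩ : ∃ r : k, algebraMap k _ r = x := by
    rwa [ExteriorAlgebra.exteriorPower, pow_zero, Submodule.mem_one] at hx
  have hvx : r • ι k v = 0 := by
    simpa [wedgeVec, ← Algebra.commutes, ← Algebra.smul_def] using congrArg Subtype.val hvx
  rcases smul_eq_zero.1 hvx with hr | hι
  · exact Subtype.ext (by simp [hr])
  · exact absurd ((ι_eq_zero_iff v).1 hι) hv

lemma comap_wedgeLeft_ker_wedgeVec {d : ℕ} {w : ExteriorAlgebra k V} (hw : w ∈ ⋀[k]^d V)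
    (v : V) {p q : ℕ} (h : d + p = q) (hinj : ∀ x ∈ ⋀[k]^(p + 1) V, w * x = 0 → x = 0) :
    (LinearMap.ker (wedgeVec v q)).comap (wedgeLeft hw p q h) = LinearMap.ker (wedgeVec v p) := by
  ext x
  simp only [Submodule.mem_comap, LinearMap.mem_ker, Subtype.ext_iff, wedgeVec, coe_wedgeLeft,
    ZeroMemClass.coe_zero]
  rw [← mul_assoc, ι_mul_eq_neg_one_pow_smul_mul hw, smul_mul_assoc, mul_assoc,
    smul_eq_zero_iff_right (pow_ne_zero _ (neg_ne_zero.2 one_ne_zero))]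
  refine ⟨hinj _ ?_, fun hx => by rw [hx, mul_zero]⟩
  simpa [wedgeVec] using (wedgeVec v p x).2

lemma finrank_range_wedgeVec {n : ℕ} (hdim : finrank k V = n + 1) {v : V} (hv : v ≠ 0)
    (p : ℕ) :
    finrank k (LinearMap.range (wedgeVec (k := k) v p)) = n.choose p := by
  have : Module.Finite k V := finite_of_finrank_eq_succ hdim
  induction p with
  | zero =>
    have h := (wedgeVec (k := k) v 0).finrank_range_add_finrank_ker
    rw [ker_wedgeVec_zero hv, finrank_bot, exteriorPower.finrank_eq, hdim] at h
    simpa using h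
  | succ p ih =>
    have h := (wedgeVec (k := k) v (p + 1)).finrank_range_add_finrank_ker
    rw [ker_wedgeVec_succ hv, ih, exteriorPower.finrank_eq, hdim, Nat.choose_succ_succ'] at h
    omega

lemma finrank_ker_wedgeVec {n : ℕ} (hdim : finrank k V = n + 1) {v : V} (hv : v ≠ 0)
    (p : ℕ) :
    finrank k (LinearMap.ker (wedgeVec (k := k) v p)) = if p = 0 then 0 else n.choose (p - 1) := by
  rcases p with _ | p
  · rw [ker_wedgeVec_zero hv, finrank_bot, if_pos rfl]
  · rw [ker_wedgeVec_succ hv, finrank_range_wedgeVec hdim hv, if_neg p.succ_ne_zero,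
      Nat.add_sub_cancel]

/-- Since `range (v ∧ ·) = ker (v ∧ ·)`, the intersection `range (v ∧ ·) ⊓ range (w ∧ ·)` is
`w ∧ ker (v ∧ ·)`. -/
theorem finrank_map_dualMap_wedgeVec_ker_dualMap_wedgeLeft {n : ℕ}
    (hdim : finrank k V = n + 1) {v : V} (hv : v ≠ 0) {d : ℕ} {w : ExteriorAlgebra k V}
    (hw : w ∈ ⋀[k]^d V) {p q : ℕ} (h : d + p = q + 1)
    (hinj : ∀ x ∈ ⋀[k]^p V, w * x = 0 → x = 0)
    (hinj' : ∀ x ∈ ⋀[k]^(p + 1) V, w * x = 0 → x = 0) :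
    finrank k ((LinearMap.ker (wedgeLeft hw p (q + 1) h).dualMap).map (wedgeVec v q).dualMap) +
        finrank k (LinearMap.ker (wedgeVec (k := k) v p)) = n.choose q := by
  have : Module.Finite k V := finite_of_finrank_eq_succ hdim
  have hW : Function.Injective (wedgeLeft hw p (q + 1) h) := (injective_wedgeLeft_iff hw h).2 hinj
  have hinf : LinearMap.range (wedgeVec v q) ⊓ LinearMap.range (wedgeLeft hw p (q + 1) h) =
      (LinearMap.ker (wedgeVec v p)).map (wedgeLeft hw p (q + 1) h) := by
    rw [← ker_wedgeVec_succ hv, inf_comm, ← Submodule.map_comap_eq,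
      comap_wedgeLeft_ker_wedgeVec hw v h hinj']
  have hrank := LinearMap.finrank_map_dualMap_ker_dualMap_add_finrank_inf (wedgeVec v q)
    (wedgeLeft hw p (q + 1) h)
  rwa [hinf, ← (Submodule.equivMapOfInjective _ hW _).finrank_eq,
    finrank_range_wedgeVec hdim hv] at hrank

end Wedge

end ExteriorAlgebra

section Contraction

variable {k V} {j : ℕ} {ω : ExteriorAlgebra k V} (hω : ω ∈ ⋀[k]^j V)

lemma contractionBy_of_le {m : ℕ} (h : j ≤ m) :
    contractionBy k V j ω hω m = (wedgeLeft hω (m - j) m (Nat.add_sub_cancel' h)).dualMap := by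
  rw [contractionBy, dif_pos h]
  rfl

lemma contractionBy_of_lt {m : ℕ} (h : m < j) : contractionBy k V j ω hω m = 0 := by
  rw [contractionBy, dif_neg (not_le.2 h)]

lemma koszulContraction_eq_dualMap_wedgeVec (v : V) (a : ℕ) :
    koszulContraction k V v a = (wedgeVec v a).dualMap :=
  rfl

lemma contractionBy_surjective_iff {m : ℕ} (h : j ≤ m) :
    Function.Surjective (contractionBy k V j ω hω m) ↔
      ∀ x ∈ ⋀[k]^(m - j) V, ω * x = 0 → x = 0 := by
  rw [contractionBy_of_le hω h, LinearMap.dualMap_surjective_iff, injective_wedgeLeft_iff]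

/-- Below degree `j` the contraction is zero, but its target `(⋀^0 V)^* ≅ k` is not. -/
lemma le_of_surjective_contractionBy {m : ℕ}
    (hs : Function.Surjective (contractionBy k V j ω hω m)) : j ≤ m := by
  by_contra! h
  have hzero : ∀ g : Dual k (⋀[k]^(m - j) V), g = 0 := fun g => by
    obtain ⟨f, rfl⟩ := hs g
    rw [contractionBy_of_lt hω h, LinearMap.zero_apply]
  rw [show m - j = 0 by omega] at hzero
  simpa using LinearMap.congr_fun (hzero (exteriorPower.zeroEquiv k V).toLinearMap)
    (exteriorPower.ιMulti k 0 ![])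

/-- `ι_v` commutes with the contraction by `ω` up to the sign `(-1)^j`. -/
lemma koszulContraction_mem_ker_contractionBy (v : V) (m : ℕ) {f : Dual k (⋀[k]^(m + 1) V)}
    (hf : f ∈ LinearMap.ker (contractionBy k V j ω hω (m + 1))) :
    koszulContraction k V v m f ∈ LinearMap.ker (contractionBy k V j ω hω m) := by
  rcases le_or_gt j m with hjm | hjm
  · rw [LinearMap.mem_ker, contractionBy_of_le hω (by omega)] at hf
    rw [LinearMap.mem_ker, contractionBy_of_le hω hjm]
    refine LinearMap.ext fun x => ?_
    have hx : ι k v * x ∈ ⋀[k]^(m + 1 - j) V := by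
      simpa [wedgeVec, Nat.sub_add_comm hjm] using (wedgeVec v (m - j) x).2
    have hcomm : wedgeVec v m (wedgeLeft hω (m - j) m (Nat.add_sub_cancel' hjm) x) =
        (-1 : k) ^ j • wedgeLeft hω (m + 1 - j) (m + 1) (by omega) ⟨_, hx⟩ :=
      Subtype.ext <| by
        simp only [wedgeVec, coe_wedgeLeft, SetLike.val_smul]
        rw [← mul_assoc, ι_mul_eq_neg_one_pow_smul_mul hω, smul_mul_assoc, mul_assoc]
    simp only [LinearMap.dualMap_apply, koszulContraction_eq_dualMap_wedgeVec, hcomm, map_smul,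
      LinearMap.zero_apply]
    rw [← LinearMap.dualMap_apply, hf, LinearMap.zero_apply, smul_zero]
  · rw [contractionBy_of_lt hω hjm]
    exact LinearMap.mem_ker.2 rfl

end Contraction

theorem koszul_restricted_to_contraction_kernels_constant_rank
    (n : ℕ) (hdim : Module.finrank k V = n + 1)
    (j a : ℕ)
    (ω : ExteriorAlgebra k V) (hω : ω ∈ ⋀[k]^j V)
    (hsurj1 : Function.Surjective (contractionBy k V j ω hω (a + 1)))
    (hsurj2 : Function.Surjective (contractionBy k V j ω hω (a + 2))) :
    ∀ v : V, v ≠ 0 →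
      (∀ f ∈ LinearMap.ker (contractionBy k V j ω hω (a + 1)),
        koszulContraction k V v a f ∈ LinearMap.ker (contractionBy k V j ω hω a)) ∧
      (Module.finrank k
          ↥(Submodule.map (koszulContraction k V v a)
            (LinearMap.ker (contractionBy k V j ω hω (a + 1)))) : ℤ) =
        (Nat.choose n a : ℤ) - (if j ≤ a then (Nat.choose n (a - j) : ℤ) else 0) := by
  intro v hv
  refine ⟨fun f hf => koszulContraction_mem_ker_contractionBy hω v a hf, ?_⟩
  have hja : j ≤ a + 1 := le_of_surjective_contractionBy hω hsurj1
  have hinj := (contractionBy_surjective_iff hω hja).1 hsurj1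
  have hinj' : ∀ x ∈ ⋀[k]^(a + 1 - j + 1) V, ω * x = 0 → x = 0 := by
    rw [show a + 1 - j + 1 = a + 2 - j by omega]
    exact (contractionBy_surjective_iff hω (by omega)).1 hsurj2
  have hrank := finrank_map_dualMap_wedgeVec_ker_dualMap_wedgeLeft hdim hv hω
    (Nat.add_sub_cancel' hja) hinj hinj'
  rw [finrank_ker_wedgeVec hdim hv, show a + 1 - j - 1 = a - j by omega] at hrank
  rw [contractionBy_of_le hω hja, koszulContraction_eq_dualMap_wedgeVec]
  split_ifs at hrank ⊢ <;> omega
end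

section
/- Let k be an algebraically closed field of characteristic 0. There exists a 14×14 matrix of linear forms in 6 variables over k of constant rank 9; that is, there exists a k-linear map M : k^6 → Matrix(14, 14, k) such that for every nonzero v ∈ k^6 the matrix M(v) has rank 9. -/
/-- There exists a 14×14 matrix of linear forms in 6 variables over an algebraically
closed field of characteristic 0 of constant rank 9. -/
theorem exists_matrix_linear_forms_14_14_rank_9
    (k : Type*) [Field k] [IsAlgClosed k] [CharZero k] :
    ∃ M : (Fin 6 → k) →ₗ[k] Matrix (Fin 14) (Fin 14) k,
      ∀ v : Fin 6 → k, v ≠ 0 → (M v).rank = 9 := by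
  classical
  let f : (Fin 6 → k) → Matrix (Fin 14) (Fin 14) k := fun v => Matrix.of fun i j =>
    if (j : ℕ) ≤ (i : ℕ) ∧ (j : ℕ) < 9 then
      (if h : (i : ℕ) - (j : ℕ) < 6 then v ⟨(i : ℕ) - (j : ℕ), h⟩ else 0) else 0
  have hadd : ∀ v w, f (v + w) = f v + f w := by
    intro v w
    ext i j
    simp only [f, Matrix.of_apply, Matrix.add_apply, Pi.add_apply]
    split_ifs <;> simp
  have hsmul : ∀ (c : k) (v : Fin 6 → k), f (c • v) = c • f v := by
    intro c v
    ext i j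
    simp only [f, Matrix.of_apply, Matrix.smul_apply, Pi.smul_apply, smul_eq_mul]
    split_ifs <;> simp
  refine ⟨⟨⟨f, hadd⟩, hsmul⟩, ?_⟩
  intro v hv
  set B : Matrix (Fin 14) (Fin 9) k := (f v).submatrix id (Fin.castAdd 5) with hB
  have hcastinj : Function.Injective (Fin.castAdd (n := 9) 5) := by
    intro a b hab
    exact Fin.ext (by simpa using congrArg Fin.val hab)
  have hcomp : (f v).mulVecLin
      = B.mulVecLin.comp (LinearMap.funLeft k k (Fin.castAdd 5)) := by
    apply LinearMap.ext
    intro w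
    funext i
    simp only [Matrix.mulVecLin_apply, LinearMap.comp_apply, LinearMap.funLeft_apply,
      Matrix.mulVec, dotProduct, hB, Matrix.submatrix_apply, id]
    calc ∑ j : Fin 14, f v i j * w j
        = ∑ p : Fin 9 ⊕ Fin 5, f v i (finSumFinEquiv p) * w (finSumFinEquiv p) :=
          (Fintype.sum_equiv (finSumFinEquiv (m := 9) (n := 5)) _ _ (fun _ => rfl)).symm
      _ = (∑ j : Fin 9, f v i (Fin.castAdd 5 j) * w (Fin.castAdd 5 j))
          + ∑ j : Fin 5, f v i (Fin.natAdd 9 j) * w (Fin.natAdd 9 j) := by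
          rw [Fintype.sum_sum_type]
          rfl
      _ = ∑ j : Fin 9, f v i (Fin.castAdd 5 j) * w (Fin.castAdd 5 j) := by
          have : ∀ j : Fin 5, f v i (Fin.natAdd 9 j) * w (Fin.natAdd 9 j) = 0 := by
            intro j
            have h9 : ¬ ((Fin.natAdd 9 j : Fin 14) : ℕ) < 9 := by
              simp [Fin.natAdd]
            simp only [f, Matrix.of_apply]
            rw [if_neg (by tauto)]
            exact zero_mul _
          simp [this]
  have hinj : Function.Injective B.mulVecLin := by
    rw [← LinearMap.ker_eq_bot, LinearMap.ker_eq_bot']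
    intro u hu
    obtain ⟨n0, hn0⟩ := Function.ne_iff.mp hv
    have hex : ∃ n : ℕ, ∃ h : n < 6, v ⟨n, h⟩ ≠ 0 := ⟨n0, n0.isLt, by simpa using hn0⟩
    set i0 := Nat.find hex with hi0
    obtain ⟨hi0lt, hi0ne⟩ := Nat.find_spec hex
    have hmin : ∀ m (hm : m < 6), m < i0 → v ⟨m, hm⟩ = 0 := by
      intro m hm hmi
      by_contra h
      exact (Nat.find_min hex hmi) ⟨hm, h⟩
    have key : ∀ n, ∀ hn : n < 9, u ⟨n, hn⟩ = 0 := by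
      intro n
      induction n using Nat.strong_induction_on with
      | _ n IH =>
        intro hn
        have hi : i0 + n < 14 := by omega
        have heq := congrFun hu ⟨i0 + n, hi⟩
        simp only [Matrix.mulVecLin_apply, Matrix.mulVec, dotProduct,
          Pi.zero_apply] at heq
        rw [Finset.sum_eq_single (⟨n, hn⟩ : Fin 9)] at heq
        · have hent : B ⟨i0 + n, hi⟩ ⟨n, hn⟩ = v ⟨i0, hi0lt⟩ := by
            simp only [hB, Matrix.submatrix_apply, id, f, Matrix.of_apply]
            have hc : ((Fin.castAdd 5 (⟨n, hn⟩ : Fin 9) : Fin 14) : ℕ) = n := rfl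
            rw [hc]
            rw [if_pos ⟨by omega, hn⟩]
            rw [dif_pos (by omega : i0 + n - n < 6)]
            congr 1
            exact Fin.ext (by simp)
          rw [hent] at heq
          rcases mul_eq_zero.mp heq with h | h
          · exact absurd h hi0ne
          · exact h
        · intro b _ hb
          have hbval : (b : ℕ) ≠ n := fun h => hb (Fin.ext h)
          rcases lt_or_gt_of_ne hbval with hlt | hgt
          · have := IH b hlt b.isLt
            rw [Fin.eta] at this
            rw [this, mul_zero]
          · have hent : B ⟨i0 + n, hi⟩ b = 0 := by
              simp only [hB, Matrix.submatrix_apply, id, f, Matrix.of_apply]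
              have hc : ((Fin.castAdd 5 b : Fin 14) : ℕ) = (b : ℕ) := rfl
              rw [hc]
              by_cases hle : (b : ℕ) ≤ i0 + n
              · rw [if_pos ⟨hle, b.isLt⟩]
                rw [dif_pos (by omega : i0 + n - (b : ℕ) < 6)]
                exact hmin _ _ (by omega)
              · rw [if_neg (by tauto)]
            rw [hent, zero_mul]
        · intro h
          exact absurd (Finset.mem_univ _) h
    funext j
    have := key j j.isLt
    rwa [Fin.eta] at this
  have hsurj : Function.Surjective (LinearMap.funLeft k k (Fin.castAdd (n := 9) 5)) :=
    LinearMap.funLeft_surjective_of_injective k k _ hcastinj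
  have hrange : LinearMap.range (f v).mulVecLin = LinearMap.range B.mulVecLin := by
    rw [hcomp, LinearMap.range_comp_of_range_eq_top]
    exact LinearMap.range_eq_top.mpr hsurj
  show Matrix.rank (f v) = 9
  rw [Matrix.rank, hrange, LinearMap.finrank_range_of_inj hinj]
  simp
end

section
/- Let k be an algebraically closed field of characteristic 0. There exists a 12×8 matrix of linear forms in 4 variables over k of constant rank 7; that is, there exists a k-linear map M : k^4 → Matrix(12, 8, k) such that for every nonzero v ∈ k^4 the matrix M(v) has rank 7. -/
open Polynomial

noncomputable section CR78

namespace CR78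

variable {k : Type*} [Field k]

private lemma eq_C_of_dvd_derivative [CharZero k] {g : k[X]} (h : g ∣ derivative g) :
    ∃ u : k, g = C u := by
  rcases eq_or_ne g.natDegree 0 with h0 | h0
  · exact ⟨g.coeff 0, eq_C_of_natDegree_eq_zero h0⟩
  · have hd : derivative g ≠ 0 := fun hh => h0 (natDegree_eq_zero_of_derivative_eq_zero hh)
    exact absurd (natDegree_le_of_dvd h hd) (not_le.mpr (natDegree_derivative_lt h0))

private lemma exists_C_mul_of_wronskian_eq_zero [CharZero k] {f g : k[X]} (hg : g ≠ 0)
    (h : derivative f * g = f * derivative g) : ∃ c : k, f = C c * g := by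
  rcases eq_or_ne f 0 with rfl | hf
  · exact ⟨0, by simp⟩
  classical
  letI : GCDMonoid k[X] := EuclideanDomain.gcdMonoid k[X]
  set d : k[X] := GCDMonoid.gcd f g with hd
  have hd0 : d ≠ 0 := gcd_ne_zero_of_right hg
  set f1 : k[X] := f / d with hf1d
  set g1 : k[X] := g / d with hg1d
  have hf1 : d * f1 = f := EuclideanDomain.mul_div_cancel' hd0 (gcd_dvd_left f g)
  have hg1 : d * g1 = g := EuclideanDomain.mul_div_cancel' hd0 (gcd_dvd_right f g)
  have hcop : IsCoprime f1 g1 := isCoprime_div_gcd_div_gcd hg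
  have hg10 : g1 ≠ 0 := right_div_gcd_ne_zero hg
  have hf10 : f1 ≠ 0 := left_div_gcd_ne_zero hf
  have key : derivative f1 * g1 = f1 * derivative g1 := by
    have h2 : d * d * (derivative f1 * g1) = d * d * (f1 * derivative g1) := by
      have h' := h
      rw [← hf1, ← hg1, derivative_mul, derivative_mul] at h'
      linear_combination h'
    exact mul_left_cancel₀ (mul_ne_zero hd0 hd0) h2
  have hgd : g1 ∣ derivative g1 := by
    have : g1 ∣ derivative g1 * f1 := ⟨derivative f1, by linear_combination -key⟩
    exact hcop.symm.dvd_of_dvd_mul_right this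
  have hfd : f1 ∣ derivative f1 := by
    have : f1 ∣ derivative f1 * g1 := ⟨derivative g1, by linear_combination key⟩
    exact hcop.dvd_of_dvd_mul_right this
  obtain ⟨a, ha⟩ := eq_C_of_dvd_derivative hfd
  obtain ⟨u, hu⟩ := eq_C_of_dvd_derivative hgd
  have hu0 : u ≠ 0 := fun h0 => hg10 (by rw [hu, h0, map_zero])
  refine ⟨a * u⁻¹, ?_⟩
  have hCu : C u⁻¹ * C u = 1 := by rw [← C_mul, inv_mul_cancel₀ hu0, map_one]
  rw [← hf1, ← hg1, ha, hu, C_mul]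
  linear_combination (-(C a * d)) * hCu

private lemma eq_C_mul_sq [CharZero k] {p f : k[X]} (hp : p ≠ 0)
    (h : 2 * derivative p * f = p * derivative f) : ∃ c : k, f = C c * p ^ 2 := by
  apply exists_C_mul_of_wronskian_eq_zero (pow_ne_zero 2 hp)
  have hd2 : derivative (p ^ 2) = 2 * p * derivative p := by
    rw [sq, derivative_mul]; ring
  rw [hd2]
  linear_combination (-p) * h

/-- the linear polynomial attached to `v`. -/
def P (v : Fin 4 → k) : k[X] := C (v 0) + C (v 1) * X + C (v 2) * X ^ 2 + C (v 3) * X ^ 3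

/-- the operator `f ↦ 2 p' f - p f'`. -/
def T (p : k[X]) : k[X] →ₗ[k] k[X] :=
  LinearMap.mulLeft k (2 * derivative p) - (LinearMap.mulLeft k p) ∘ₗ
    (derivative : k[X] →ₗ[k] k[X])

lemma T_apply (p f : k[X]) : T p f = 2 * derivative p * f - p * derivative f := rfl

/-- the matrix of `T (P v)` in the monomial bases. -/
def Mmat (v : Fin 4 → k) : Matrix (Fin 12) (Fin 8) k :=
  Matrix.of fun i j => (T (P v) (X ^ (j : ℕ))).coeff (i : ℕ)

lemma P_add (v w : Fin 4 → k) : P (v + w) = P v + P w := by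
  simp only [P, Pi.add_apply, C_add]; ring

lemma P_smul (c : k) (v : Fin 4 → k) : P (c • v) = C c * P v := by
  simp only [P, Pi.smul_apply, smul_eq_mul, C_mul]; ring

/-- `Mmat` as a linear map in `v`. -/
def Mlin : (Fin 4 → k) →ₗ[k] Matrix (Fin 12) (Fin 8) k where
  toFun := Mmat
  map_add' v w := by
    ext i j
    simp only [Mmat, Matrix.of_apply, Matrix.add_apply, P_add]
    rw [T_apply, T_apply, T_apply, ← coeff_add]
    congr 1
    rw [map_add]
    ring
  map_smul' c v := by
    ext i j
    simp only [Mmat, Matrix.of_apply, Matrix.smul_apply, RingHom.id_apply, smul_eq_mul, P_smul]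
    rw [T_apply, T_apply, ← coeff_C_mul]
    congr 1
    rw [derivative_C_mul]
    ring

/-- the polynomial with coefficient vector `x`. -/
def e (x : Fin 8 → k) : k[X] := ∑ j : Fin 8, x j • X ^ (j : ℕ)

lemma coeff_e (x : Fin 8 → k) (j : Fin 8) : (e x).coeff (j : ℕ) = x j := by
  rw [e, finset_sum_coeff]
  rw [Finset.sum_eq_single j]
  · simp [coeff_smul, coeff_X_pow]
  · intro i _ hij
    have : ¬ ((j : ℕ) = (i : ℕ)) := fun hh => hij (Fin.ext hh.symm)
    simp [coeff_smul, coeff_X_pow, this]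
  · intro hj; exact absurd (Finset.mem_univ j) hj

lemma coeff_e_ge (x : Fin 8 → k) {n : ℕ} (hn : 8 ≤ n) : (e x).coeff n = 0 := by
  rw [e, finset_sum_coeff]
  apply Finset.sum_eq_zero
  intro i _
  have : ¬ (n = (i : ℕ)) := by have := i.isLt; omega
  simp [coeff_smul, coeff_X_pow, this]

lemma natDegree_e_le (x : Fin 8 → k) : (e x).natDegree ≤ 7 :=
  natDegree_le_iff_coeff_eq_zero.mpr fun _ hN => coeff_e_ge x (by omega)

lemma e_coeffs (f : k[X]) (hf : f.natDegree ≤ 7) : e (fun j => f.coeff (j : ℕ)) = f := by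
  ext n
  by_cases hn : n < 8
  · exact coeff_e _ (⟨n, hn⟩ : Fin 8)
  · rw [coeff_e_ge _ (by omega), coeff_eq_zero_of_natDegree_lt (by omega)]

lemma coeff_P_ge (v : Fin 4 → k) {n : ℕ} (hn : 4 ≤ n) : (P v).coeff n = 0 := by
  have h0 : n ≠ 0 := by omega
  have h1 : ¬ (n = 1) := by omega
  have h2 : ¬ (n = 2) := by omega
  have h3 : ¬ (n = 3) := by omega
  simp [P, coeff_C, coeff_X, coeff_X_pow, h0, h1, h2, h3, Ne.symm h1]

lemma natDegree_P_le (v : Fin 4 → k) : (P v).natDegree ≤ 3 :=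
  natDegree_le_iff_coeff_eq_zero.mpr fun _ hN => coeff_P_ge v (by omega)

lemma P_ne_zero {v : Fin 4 → k} (hv : v ≠ 0) : P v ≠ 0 := by
  intro hP
  apply hv
  have c0 : (P v).coeff 0 = v 0 := by simp [P, coeff_C, coeff_X, coeff_X_pow]
  have c1 : (P v).coeff 1 = v 1 := by simp [P, coeff_C, coeff_X, coeff_X_pow]
  have c2 : (P v).coeff 2 = v 2 := by simp [P, coeff_C, coeff_X, coeff_X_pow]
  have c3 : (P v).coeff 3 = v 3 := by simp [P, coeff_C, coeff_X, coeff_X_pow]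
  funext i
  fin_cases i
  · show v 0 = 0; rw [← c0, hP, coeff_zero]
  · show v 1 = 0; rw [← c1, hP, coeff_zero]
  · show v 2 = 0; rw [← c2, hP, coeff_zero]
  · show v 3 = 0; rw [← c3, hP, coeff_zero]

lemma coeff_T_ge {p f : k[X]} (hp : p.natDegree ≤ 3) (hf : f.natDegree ≤ 7) {n : ℕ}
    (hn : 12 ≤ n) : (T p f).coeff n = 0 := by
  have hd : (derivative p).natDegree ≤ 3 :=
    le_trans (natDegree_derivative_le p) (le_trans (Nat.sub_le _ _) hp)
  have hdf : (derivative f).natDegree ≤ 7 :=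
    le_trans (natDegree_derivative_le f) (le_trans (Nat.sub_le _ _) hf)
  have h1 : (2 * derivative p * f).natDegree ≤ 11 := by
    refine le_trans natDegree_mul_le ?_
    have : (2 * derivative p).natDegree ≤ 3 := by
      refine le_trans natDegree_mul_le ?_
      simpa using hd
    omega
  have h2 : (p * derivative f).natDegree ≤ 11 := by
    refine le_trans natDegree_mul_le ?_
    omega
  rw [T_apply]
  have : ((2 * derivative p * f) - p * derivative f).natDegree ≤ 11 := by
    refine le_trans (natDegree_sub_le _ _) ?_
    omega
  exact coeff_eq_zero_of_natDegree_lt (by omega)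

lemma mulVec_Mmat (v : Fin 4 → k) (x : Fin 8 → k) (i : Fin 12) :
    (Mmat v).mulVec x i = (T (P v) (e x)).coeff (i : ℕ) := by
  have hTe : T (P v) (e x) = ∑ j : Fin 8, x j • T (P v) (X ^ (j : ℕ)) := by
    rw [e, map_sum]
    exact Finset.sum_congr rfl fun j _ => by rw [map_smul]
  rw [hTe, finset_sum_coeff]
  simp only [coeff_smul, smul_eq_mul]
  rw [Matrix.mulVec, dotProduct]
  exact Finset.sum_congr rfl fun j _ => by rw [Mmat, Matrix.of_apply, mul_comm]

end CR78

end CR78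

/-- There exists a 12×8 matrix of linear forms in 4 variables over an algebraically
closed field of characteristic 0 of constant rank 7. -/
theorem exists_matrix_linear_forms_12_8_rank_7
    (k : Type*) [Field k] [IsAlgClosed k] [CharZero k] :
    ∃ M : (Fin 4 → k) →ₗ[k] Matrix (Fin 12) (Fin 8) k,
      ∀ v : Fin 4 → k, v ≠ 0 → (M v).rank = 7 := by
  classical
  refine ⟨CR78.Mlin, ?_⟩
  intro v hv
  have hMv : CR78.Mlin v = CR78.Mmat v := rfl
  rw [hMv]
  set p : Polynomial k := CR78.P v with hpdef
  have hp : p ≠ 0 := CR78.P_ne_zero hv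
  set q : Fin 8 → k := fun j => (p ^ 2).coeff (j : ℕ) with hqdef
  have hp2deg : (p ^ 2).natDegree ≤ 7 := by
    refine le_trans (Polynomial.natDegree_pow_le) ?_
    have h3 := CR78.natDegree_P_le v
    rw [← hpdef] at h3
    omega
  have heq : CR78.e q = p ^ 2 := CR78.e_coeffs _ hp2deg
  have hTp2 : CR78.T p (p ^ 2) = 0 := by
    rw [CR78.T_apply]
    have hd2 : Polynomial.derivative (p ^ 2) = 2 * p * Polynomial.derivative p := by
      rw [sq, Polynomial.derivative_mul]; ring
    rw [hd2]; ring
  have hker : LinearMap.ker (CR78.Mmat v).mulVecLin = Submodule.span k {q} := by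
    apply le_antisymm
    · intro x hx
      have hx0 : (CR78.Mmat v).mulVec x = 0 := hx
      have hx' : ∀ i : Fin 12, (CR78.T p (CR78.e x)).coeff (i : ℕ) = 0 := by
        intro i
        rw [← CR78.mulVec_Mmat, hx0]
        rfl
      have hT0 : CR78.T p (CR78.e x) = 0 := by
        ext n
        rw [Polynomial.coeff_zero]
        rcases lt_or_ge n 12 with hn | hn
        · exact hx' (⟨n, hn⟩ : Fin 12)
        · exact CR78.coeff_T_ge (CR78.natDegree_P_le v) (CR78.natDegree_e_le x) hn
      have hode : 2 * Polynomial.derivative p * (CR78.e x) =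
          p * Polynomial.derivative (CR78.e x) := by
        rw [CR78.T_apply] at hT0
        exact sub_eq_zero.mp hT0
      obtain ⟨c, hc⟩ := CR78.eq_C_mul_sq hp hode
      rw [Submodule.mem_span_singleton]
      refine ⟨c, ?_⟩
      funext j
      have : (CR78.e x).coeff (j : ℕ) = x j := CR78.coeff_e x j
      rw [Pi.smul_apply, ← this, hc, Polynomial.coeff_C_mul, smul_eq_mul, hqdef]
    · rw [Submodule.span_le, Set.singleton_subset_iff, SetLike.mem_coe, LinearMap.mem_ker]
      funext i
      rw [Matrix.mulVecLin_apply, CR78.mulVec_Mmat, heq, hTp2]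
      simp
  have hq0 : q ≠ 0 := by
    intro h0
    apply pow_ne_zero 2 hp
    rw [← heq, h0]
    simp [CR78.e]
  have hrank : (CR78.Mmat v).rank
      = Module.finrank k (LinearMap.range (CR78.Mmat v).mulVecLin) := rfl
  have h8 : Module.finrank k (Fin 8 → k) = 8 := by simp
  have hsum := LinearMap.finrank_range_add_finrank_ker (CR78.Mmat v).mulVecLin
  rw [hker, finrank_span_singleton hq0, h8] at hsum
  omega
end
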